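/- arXiv:1912.13016 — 10 statements merged into one kernel-verified Lean document; each statement's English description precedes it below -/
import Mathlib

section
/- Let A be a subset of a real normed space and let f : A → ℝ satisfy the Vanderbei condition with modulus L. Let y ∈ A, let F ∈ ℝ with F ≤ f(y), let ε > 0, and let η be a real number with 0 < η ≤ f(y) − F + ε. Then every x ∈ A with ‖x − y‖ ≤ (f(y) − F + ε − η)/L(η) satisfies f(x) ≥ F − ε. -/
/-- Exclusion-ball estimate: if `f` satisfies the Vanderbei condition on `A` with
modulus `L`, `F ≤ f y`, `ε > 0`, `0 < η ≤ f y - F + ε`, then every `x ∈ A` with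
`‖x - y‖ ≤ (f y - F + ε - η) / L η` satisfies `f x ≥ F - ε`. -/
theorem stmt_0 {E : Type*} [NormedAddCommGroup E] [NormedSpace ℝ E]
    (A : Set E) (f : E → ℝ) (L : ℝ → ℝ)
    (hLpos : ∀ η : ℝ, 0 < η → 0 < L η)
    (hV : ∀ η : ℝ, 0 < η → ∀ x ∈ A, ∀ y ∈ A, |f x - f y| ≤ L η * ‖x - y‖ + η)
    (y : E) (hy : y ∈ A) (F : ℝ) (hF : F ≤ f y)
    (ε : ℝ) (hε : 0 < ε) (η : ℝ) (hη : 0 < η) (hηle : η ≤ f y - F + ε)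
    (x : E) (hx : x ∈ A) (hxy : ‖x - y‖ ≤ (f y - F + ε - η) / L η) :
    F - ε ≤ f x := by
  have hL := hLpos η hη
  have h1 := hV η hη x hx y hy
  have h2 : L η * ‖x - y‖ ≤ f y - F + ε - η := by
    calc L η * ‖x - y‖ ≤ L η * ((f y - F + ε - η) / L η) :=
          mul_le_mul_of_nonneg_left hxy hL.le
      _ = f y - F + ε - η := by field_simp
  have := abs_le.mp h1
  linarith [this.1]
end

section
/- Let P be a subset of a real normed space and let f : P → ℝ satisfy the Vanderbei condition with modulus L. Let ε > 0, let y₁, …, y_m ∈ P, put F := min_{1≤j≤m} f(y_j), and for each j let η_j be a real number with 0 < η_j ≤ f(y_j) − F + ε. If every x ∈ P satisfies ‖x − y_j‖ ≤ (f(y_j) − F + ε − η_j)/L(η_j) for some j, then F ≤ f(x) + ε for every x ∈ P; in particular F ≤ inf_{x∈P} f(x) + ε, so any point y_j attaining the minimum F is an ε-optimal solution of the problem of globally minimizing f over P. -/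
/-- Algorithm-free content of Proposition 2: if the exclusion balls around the evaluated
points `y j` cover `P`, then the record `F = min_j f (y j)` satisfies `F ≤ f x + ε`
for all `x ∈ P`; in particular `F ≤ inf_P f + ε`, so any minimizing `y j` is ε-optimal. -/
theorem stmt_1 {E : Type*} [NormedAddCommGroup E] [NormedSpace ℝ E]
    (P : Set E) (f : E → ℝ) (L : ℝ → ℝ)
    (hLpos : ∀ η : ℝ, 0 < η → 0 < L η)
    (hV : ∀ η : ℝ, 0 < η → ∀ x ∈ P, ∀ y ∈ P, |f x - f y| ≤ L η * ‖x - y‖ + η)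
    (ε : ℝ) (hε : 0 < ε)
    (m : ℕ) (hm : 0 < m) (y : Fin m → E) (hy : ∀ j, y j ∈ P)
    (F : ℝ)
    (hF : F = Finset.univ.inf'
      (Finset.univ_nonempty_iff.mpr (Fin.pos_iff_nonempty.mp hm)) (fun j => f (y j)))
    (η : Fin m → ℝ) (hη : ∀ j, 0 < η j) (hηle : ∀ j, η j ≤ f (y j) - F + ε)
    (hcover : ∀ x ∈ P, ∃ j, ‖x - y j‖ ≤ (f (y j) - F + ε - η j) / L (η j)) :
    (∀ x ∈ P, F ≤ f x + ε) ∧ F ≤ sInf (f '' P) + ε ∧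
      ∀ j, f (y j) = F → f (y j) ≤ sInf (f '' P) + ε := by
  have main : ∀ x ∈ P, F ≤ f x + ε := by
    intro x hx
    obtain ⟨j, hj⟩ := hcover x hx
    have hL := hLpos (η j) (hη j)
    have h1 : |f (y j) - f x| ≤ L (η j) * ‖y j - x‖ + η j :=
      hV (η j) (hη j) (y j) (hy j) x hx
    rw [show ‖y j - x‖ = ‖x - y j‖ by rw [norm_sub_rev]] at h1
    have h2 : L (η j) * ‖x - y j‖ ≤ f (y j) - F + ε - η j := by
      have := mul_le_mul_of_nonneg_left hj hL.le
      rwa [mul_div_cancel₀ _ hL.ne'] at this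
    have h3 : f (y j) - f x ≤ f (y j) - F + ε :=
      le_trans (le_trans (le_abs_self _) h1) (by linarith)
    have hFle : F ≤ f (y j) := by
      rw [hF]; exact Finset.inf'_le _ (Finset.mem_univ j)
    linarith
  have hne : (f '' P).Nonempty := ⟨f (y ⟨0, hm⟩), ⟨y ⟨0, hm⟩, hy _, rfl⟩⟩
  have hsinf : F - ε ≤ sInf (f '' P) := by
    apply le_csInf hne
    rintro b ⟨x, hx, rfl⟩
    linarith [main x hx]
  refine ⟨main, by linarith, fun j hj => ?_⟩
  rw [hj]; linarith
end

section
/- Let A be a subset of a real normed space and let f : A → ℝ satisfy the Vanderbei condition with modulus L. Let ε > 0, let η satisfy 0 < η < ε, let y ∈ A, and let F ∈ ℝ with F ≤ f(y). Put h′ := 2(ε − η)/L(η) + (f(y) − F)/L(η). Then every x ∈ A with ‖x − y‖ ≤ h′/2 satisfies f(x) ≥ F − ε. -/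
/-- Covering guarantee of Step 3 of Algorithm I: with base step `h = 2(ε-η)/L η` and
corrected step `h' = h + (f y - F)/L η`, on the ball of radius `h'/2` around `y`
the record `F` cannot be improved by more than `ε`. -/
theorem stmt_2 {E : Type*} [NormedAddCommGroup E] [NormedSpace ℝ E]
    (A : Set E) (f : E → ℝ) (L : ℝ → ℝ)
    (hLpos : ∀ η : ℝ, 0 < η → 0 < L η)
    (hV : ∀ η : ℝ, 0 < η → ∀ x ∈ A, ∀ y ∈ A, |f x - f y| ≤ L η * ‖x - y‖ + η)
    (ε η : ℝ) (hη : 0 < η) (hηε : η < ε)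
    (y : E) (hy : y ∈ A) (F : ℝ) (hF : F ≤ f y)
    (h' : ℝ) (hh' : h' = 2 * (ε - η) / L η + (f y - F) / L η)
    (x : E) (hx : x ∈ A) (hxy : ‖x - y‖ ≤ h' / 2) :
    F - ε ≤ f x := by
  have hL : 0 < L η := hLpos η hη
  have hVxy := hV η hη x hx y hy
  have habs : -(L η * ‖x - y‖ + η) ≤ f x - f y := neg_le_of_abs_le hVxy
  have hLh : L η * h' = 2 * (ε - η) + (f y - F) := by
    rw [hh']; field_simp
  nlinarith [mul_le_mul_of_nonneg_left hxy hL.le]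
end

section
/- For all real numbers s, t and every η > 0, |10·exp(−√(|s|/2)) − 10·exp(−√(|t|/2))| ≤ (25/(2η))·|s − t| + η. -/
/-- For nonnegative `a ≤ b`, `exp(-a) - exp(-b) ≤ b - a`. -/
lemma exp_neg_lipschitz_aux {a b : ℝ} (ha : 0 ≤ a) (hab : a ≤ b) :
    Real.exp (-a) - Real.exp (-b) ≤ b - a := by
  have h1 : Real.exp (-a) ≤ 1 := Real.exp_le_one_iff.mpr (by linarith)
  have h2 : 1 - (b - a) ≤ Real.exp (-(b - a)) := by
    have := Real.add_one_le_exp (-(b - a)); linarith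
  have h3 : Real.exp (-b) = Real.exp (-a) * Real.exp (-(b - a)) := by
    rw [← Real.exp_add]; ring_nf
  have h4 : 0 ≤ 1 - Real.exp (-(b - a)) := by
    have : Real.exp (-(b - a)) ≤ 1 := Real.exp_le_one_iff.mpr (by linarith)
    linarith
  have h5 : Real.exp (-a) - Real.exp (-b)
      = Real.exp (-a) * (1 - Real.exp (-(b - a))) := by rw [h3]; ring
  have h6 : Real.exp (-a) * (1 - Real.exp (-(b - a))) ≤ 1 * (1 - Real.exp (-(b - a))) :=
    mul_le_mul_of_nonneg_right h1 h4
  linarith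

lemma exp_neg_lipschitz {a b : ℝ} (ha : 0 ≤ a) (hb : 0 ≤ b) :
    |Real.exp (-a) - Real.exp (-b)| ≤ |a - b| := by
  rcases le_total a b with h | h
  · have he : Real.exp (-b) ≤ Real.exp (-a) := Real.exp_le_exp.mpr (by linarith)
    rw [abs_of_nonneg (by linarith), abs_of_nonpos (by linarith)]
    have := exp_neg_lipschitz_aux ha h; linarith
  · have he : Real.exp (-a) ≤ Real.exp (-b) := Real.exp_le_exp.mpr (by linarith)
    rw [abs_of_nonpos (by linarith), abs_of_nonneg (by linarith)]
    have := exp_neg_lipschitz_aux hb h; linarith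

/-- One-dimensional core of the Vanderbei estimate for the first test objective:
`u ↦ 10 exp(−√(|u|/2))` satisfies the ε-Lipschitz inequality with `L(η) = 25/(2η)`. -/
theorem stmt_6 (s t η : ℝ) (hη : 0 < η) :
    |10 * Real.exp (-Real.sqrt (|s| / 2)) - 10 * Real.exp (-Real.sqrt (|t| / 2))|
      ≤ 25 / (2 * η) * |s - t| + η := by
  set a := Real.sqrt (|s| / 2) with ha_def
  set b := Real.sqrt (|t| / 2) with hb_def
  have ha : 0 ≤ a := Real.sqrt_nonneg _
  have hb : 0 ≤ b := Real.sqrt_nonneg _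
  have ha2 : a ^ 2 = |s| / 2 := Real.sq_sqrt (by positivity)
  have hb2 : b ^ 2 = |t| / 2 := Real.sq_sqrt (by positivity)
  have key : |10 * Real.exp (-a) - 10 * Real.exp (-b)| ≤ 10 * |a - b| := by
    have := exp_neg_lipschitz ha hb
    calc |10 * Real.exp (-a) - 10 * Real.exp (-b)|
        = 10 * |Real.exp (-a) - Real.exp (-b)| := by
          rw [show 10 * Real.exp (-a) - 10 * Real.exp (-b)
              = 10 * (Real.exp (-a) - Real.exp (-b)) by ring, abs_mul,
            abs_of_nonneg (show (0:ℝ) ≤ 10 by norm_num)]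
      _ ≤ 10 * |a - b| := by linarith
  -- (a - b)^2 ≤ |s - t| / 2
  have habs : |(|s| - |t|)| ≤ |s - t| := abs_abs_sub_abs_le_abs_sub s t
  have hsq : (a - b) ^ 2 ≤ |s - t| / 2 := by
    have h1 : |a - b| * |a - b| ≤ |a - b| * (a + b) := by
      apply mul_le_mul_of_nonneg_left _ (abs_nonneg _)
      rcases le_total a b with h | h
      · rw [abs_of_nonpos (by linarith)]; linarith
      · rw [abs_of_nonneg (by linarith)]; linarith
    have h2 : |a - b| * (a + b) = |a ^ 2 - b ^ 2| := by
      rw [← abs_of_nonneg (show (0:ℝ) ≤ a + b by linarith), ← abs_mul]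
      ring_nf
    have h3 : |a ^ 2 - b ^ 2| ≤ |s - t| / 2 := by
      rw [ha2, hb2]
      have : |s| / 2 - |t| / 2 = (|s| - |t|) / 2 := by ring
      rw [this, abs_div, abs_of_nonneg (show (0:ℝ) ≤ 2 by norm_num)]
      linarith
    calc (a - b) ^ 2 = |a - b| * |a - b| := by rw [← abs_mul, ← sq, abs_sq]
      _ ≤ |a - b| * (a + b) := h1
      _ = |a ^ 2 - b ^ 2| := h2
      _ ≤ |s - t| / 2 := h3
  have hd : 0 ≤ |a - b| := abs_nonneg _
  have hd2 : |a - b| ^ 2 = (a - b) ^ 2 := sq_abs _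
  have hηne : (2 * η) ≠ 0 := by positivity
  have final : 10 * |a - b| ≤ 25 * |s - t| / (2 * η) + η := by
    rw [div_add' _ _ _ hηne, le_div_iff₀ (by positivity)]
    nlinarith [sq_nonneg (5 * |a - b| - η), hd2, hsq]
  calc |10 * Real.exp (-a) - 10 * Real.exp (-b)| ≤ 10 * |a - b| := key
    _ ≤ 25 * |s - t| / (2 * η) + η := final
    _ = 25 / (2 * η) * |s - t| + η := by ring
end

section
/- Let f₁ : [−2, 12]² → ℝ be defined by f₁(x, y) = −10·exp(−√(|x + y|/2)). Then for every η > 0 and all points p, q ∈ [−2, 12]², |f₁(p) − f₁(q)| ≤ (25/(2η))·‖p − q‖₁ + η, where ‖(u, v)‖₁ = |u| + |v| is the ℓ¹ norm on ℝ². -/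
lemma exp_neg_lip (a b : ℝ) (ha : 0 ≤ a) (hb : 0 ≤ b) :
    |Real.exp (-a) - Real.exp (-b)| ≤ |a - b| := by
  wlog h : b ≤ a generalizing a b
  · rw [abs_sub_comm, abs_sub_comm a b]; exact this b a hb ha (le_of_not_ge h)
  have h1 : Real.exp (-a) ≤ Real.exp (-b) := Real.exp_le_exp.2 (by linarith)
  have h2 : (b - a) + 1 ≤ Real.exp (b - a) := Real.add_one_le_exp _
  have h3 : Real.exp (-b) ≤ 1 := Real.exp_le_one_iff.2 (by linarith)
  have h4 : Real.exp (-a) = Real.exp (-b) * Real.exp (b - a) := by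
    rw [← Real.exp_add]; ring_nf
  have h5 : 0 < Real.exp (-b) := Real.exp_pos _
  rw [abs_of_nonpos (by linarith), abs_of_nonneg (by linarith)]
  nlinarith

lemma sqrt_abs_sub (a b : ℝ) (ha : 0 ≤ a) (hb : 0 ≤ b) :
    |Real.sqrt a - Real.sqrt b| ≤ Real.sqrt |a - b| := by
  wlog h : b ≤ a generalizing a b
  · rw [abs_sub_comm, abs_sub_comm a b]; exact this b a hb ha (le_of_not_ge h)
  have hsb : Real.sqrt b ≤ Real.sqrt a := Real.sqrt_le_sqrt h
  rw [abs_of_nonneg (by linarith), abs_of_nonneg (by linarith)]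
  have key : Real.sqrt a ≤ Real.sqrt b + Real.sqrt (a - b) := by
    have : a ≤ (Real.sqrt b + Real.sqrt (a - b)) ^ 2 := by
      have e1 : Real.sqrt b ^ 2 = b := Real.sq_sqrt hb
      have e2 : Real.sqrt (a - b) ^ 2 = a - b := Real.sq_sqrt (by linarith)
      nlinarith [Real.sqrt_nonneg b, Real.sqrt_nonneg (a - b)]
    calc Real.sqrt a ≤ Real.sqrt ((Real.sqrt b + Real.sqrt (a - b)) ^ 2) :=
          Real.sqrt_le_sqrt this
      _ = Real.sqrt b + Real.sqrt (a - b) :=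
          Real.sqrt_sq (by positivity)
  linarith

/-- Vanderbei estimate `L(η) = 25/(2η)` for the first test function
`f₁(x,y) = −10 exp(−√(|x+y|/2))` on `[−2,12]²`, in the ℓ¹ norm. -/
theorem stmt_7 (η : ℝ) (hη : 0 < η)
    (p q : ℝ × ℝ)
    (hp : p ∈ Set.Icc ((-2 : ℝ), (-2 : ℝ)) ((12 : ℝ), (12 : ℝ)))
    (hq : q ∈ Set.Icc ((-2 : ℝ), (-2 : ℝ)) ((12 : ℝ), (12 : ℝ))) :
    |(-10 * Real.exp (-Real.sqrt (|p.1 + p.2| / 2)))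
        - (-10 * Real.exp (-Real.sqrt (|q.1 + q.2| / 2)))|
      ≤ 25 / (2 * η) * (|p.1 - q.1| + |p.2 - q.2|) + η := by
  set a : ℝ := |p.1 + p.2| / 2 with ha_def
  set b : ℝ := |q.1 + q.2| / 2 with hb_def
  have ha : 0 ≤ a := by positivity
  have hb : 0 ≤ b := by positivity
  set D : ℝ := |p.1 - q.1| + |p.2 - q.2| with hD_def
  have hD : 0 ≤ D := by positivity
  have hab : |a - b| ≤ D / 2 := by
    have h1 : abs (|p.1 + p.2| - |q.1 + q.2|) ≤ |(p.1 + p.2) - (q.1 + q.2)| :=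
      abs_abs_sub_abs_le_abs_sub _ _
    have h2 : |(p.1 + p.2) - (q.1 + q.2)| ≤ D := by
      calc |(p.1 + p.2) - (q.1 + q.2)| = |(p.1 - q.1) + (p.2 - q.2)| := by ring_nf
        _ ≤ D := abs_add_le _ _
    have : |a - b| = abs (|p.1 + p.2| - |q.1 + q.2|) / 2 := by
      rw [ha_def, hb_def, div_sub_div_same, abs_div, abs_two]
    rw [this]; linarith
  -- step 1: bound the LHS by 10 * sqrt (D/2)
  have step1 : |(-10 * Real.exp (-Real.sqrt a)) - (-10 * Real.exp (-Real.sqrt b))|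
      ≤ 10 * Real.sqrt (D / 2) := by
    have e1 : |(-10 * Real.exp (-Real.sqrt a)) - (-10 * Real.exp (-Real.sqrt b))|
        = 10 * |Real.exp (-Real.sqrt b) - Real.exp (-Real.sqrt a)| := by
      rw [show (-10 * Real.exp (-Real.sqrt a)) - (-10 * Real.exp (-Real.sqrt b))
          = 10 * (Real.exp (-Real.sqrt b) - Real.exp (-Real.sqrt a)) by ring,
        abs_mul, abs_of_pos (show (0:ℝ) < 10 by norm_num)]
    rw [e1]
    have l1 : |Real.exp (-Real.sqrt b) - Real.exp (-Real.sqrt a)|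
        ≤ |Real.sqrt a - Real.sqrt b| := by
      rw [abs_sub_comm (Real.sqrt a)]
      exact exp_neg_lip _ _ (Real.sqrt_nonneg b) (Real.sqrt_nonneg a)
    have l2 : |Real.sqrt a - Real.sqrt b| ≤ Real.sqrt |a - b| := sqrt_abs_sub a b ha hb
    have l3 : Real.sqrt |a - b| ≤ Real.sqrt (D / 2) := Real.sqrt_le_sqrt hab
    linarith
  -- step 2: AM-GM
  refine le_trans step1 ?_
  set s : ℝ := Real.sqrt (D / 2) with hs_def
  have hs : 0 ≤ s := Real.sqrt_nonneg _
  have hs2 : s ^ 2 = D / 2 := Real.sq_sqrt (by linarith)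
  have key : 10 * s ≤ 25 / (2 * η) * D + η := by
    rw [show 25 / (2 * η) * D = 25 * D / (2 * η) by ring,
      div_add' _ _ _ (by positivity : (2*η) ≠ 0), le_div_iff₀ (by positivity)]
    nlinarith [sq_nonneg (5 * s - η)]
  exact key
end

section
/- Let f₂ : [−2, 12]² → ℝ be defined by f₂(x, y) = −10·exp(−√(|x + y|/2)) − exp(0.5·(cos(2πx) + cos(2πy))). Then for every η > 0 and all p, q ∈ [−2, 12]², |f₂(p) − f₂(q)| ≤ (25/(2η) + π·e)·‖p − q‖₁ + η, where ‖(u, v)‖₁ = |u| + |v| is the ℓ¹ norm on ℝ² and e is Euler's number. -/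
/-!
The function splits as `f₂ = g - h` with `g p = -10 exp(-√(|p.1 + p.2| / 2))` and
`h p = exp((cos 2πp.1 + cos 2πp.2) / 2)`. The cosine part `h` is Lipschitz with constant `π e`,
since `exp` is `e`-Lipschitz on `(-∞, 1]` and `cos` is `1`-Lipschitz. The radial part `g` is only
`1/2`-Hölder, through `√`; the AM–GM bound `√t ≤ t / (2c) + c / 2` with `c = η / 5` turns the
Hölder estimate `|√a - √b| ≤ √|a - b|` into a Lipschitz bound with slope `25 / (2η)` up to the
additive error `η`.
-/

open Real

lemma abs_exp_sub_exp_le_of_le {M u v : ℝ} (hu : u ≤ M) (hv : v ≤ M) :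
    |exp u - exp v| ≤ exp M * |u - v| := by
  wlog h : v ≤ u generalizing u v
  · simpa only [abs_sub_comm] using this hv hu (le_of_not_ge h)
  have hexp : exp u * (v - u + 1) ≤ exp v := by
    calc exp u * (v - u + 1) ≤ exp u * exp (v - u) := by gcongr; exact add_one_le_exp _
      _ = exp v := by rw [← exp_add, add_sub_cancel]
  rw [abs_of_nonneg (sub_nonneg.2 (exp_le_exp.2 h)), abs_of_nonneg (sub_nonneg.2 h)]
  calc exp u - exp v ≤ exp u * (u - v) := by linarith
    _ ≤ exp M * (u - v) := by gcongr

lemma sqrt_add_le_sqrt_add_sqrt {x y : ℝ} (hx : 0 ≤ x) (hy : 0 ≤ y) :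
    √(x + y) ≤ √x + √y := by
  rw [sqrt_le_left (by positivity)]
  nlinarith [sq_sqrt hx, sq_sqrt hy, mul_nonneg (sqrt_nonneg x) (sqrt_nonneg y)]

lemma abs_sqrt_sub_sqrt_le_sqrt_abs_sub {a b : ℝ} (ha : 0 ≤ a) (hb : 0 ≤ b) :
    |√a - √b| ≤ √|a - b| := by
  wlog h : b ≤ a generalizing a b
  · simpa only [abs_sub_comm] using this hb ha (le_of_not_ge h)
  rw [abs_of_nonneg (sub_nonneg.2 (sqrt_le_sqrt h)), abs_of_nonneg (sub_nonneg.2 h),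
    sub_le_iff_le_add']
  simpa using sqrt_add_le_sqrt_add_sqrt hb (sub_nonneg.2 h)

lemma sqrt_le_div_add_div {t c : ℝ} (ht : 0 ≤ t) (hc : 0 < c) :
    √t ≤ t / (2 * c) + c / 2 := by
  have hamgm : 2 * √t * c ≤ t + c ^ 2 := by simpa [sq_sqrt ht] using two_mul_le_add_sq (√t) c
  rw [div_add_div _ _ (by positivity) two_ne_zero, le_div_iff₀ (by positivity)]
  nlinarith

lemma abs_sqrt_sub_sqrt_le_div_add_div {a b c : ℝ} (ha : 0 ≤ a) (hb : 0 ≤ b) (hc : 0 < c) :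
    |√a - √b| ≤ |a - b| / (2 * c) + c / 2 :=
  (abs_sqrt_sub_sqrt_le_sqrt_abs_sub ha hb).trans (sqrt_le_div_add_div (abs_nonneg _) hc)

noncomputable def ackleyRadial (p : ℝ × ℝ) : ℝ :=
  -10 * exp (-√(|p.1 + p.2| / 2))

noncomputable def ackleyCos (p : ℝ × ℝ) : ℝ :=
  exp (0.5 * (cos (2 * π * p.1) + cos (2 * π * p.2)))

lemma abs_abs_add_sub_abs_add_le (p q : ℝ × ℝ) :
    |(|p.1 + p.2| - |q.1 + q.2|)| ≤ |p.1 - q.1| + |p.2 - q.2| :=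
  calc |(|p.1 + p.2| - |q.1 + q.2|)| ≤ |(p.1 + p.2) - (q.1 + q.2)| :=
        abs_abs_sub_abs_le_abs_sub _ _
    _ = |(p.1 - q.1) + (p.2 - q.2)| := by ring_nf
    _ ≤ |p.1 - q.1| + |p.2 - q.2| := abs_add_le _ _

lemma abs_ackleyRadial_sub_le {η : ℝ} (hη : 0 < η) (p q : ℝ × ℝ) :
    |ackleyRadial p - ackleyRadial q| ≤ 25 / (2 * η) * (|p.1 - q.1| + |p.2 - q.2|) + η := by
  set A := |p.1 + p.2| / 2
  set B := |q.1 + q.2| / 2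
  have hAB : |A - B| ≤ (|p.1 - q.1| + |p.2 - q.2|) / 2 := by
    rw [← sub_div, abs_div, abs_two]
    gcongr
    exact abs_abs_add_sub_abs_add_le p q
  have hexp : |exp (-√A) - exp (-√B)| ≤ |√A - √B| := by
    have := abs_exp_sub_exp_le_of_le (neg_nonpos.2 (sqrt_nonneg A)) (neg_nonpos.2 (sqrt_nonneg B))
    rwa [exp_zero, one_mul, neg_sub_neg, abs_sub_comm (√B)] at this
  calc |ackleyRadial p - ackleyRadial q| = 10 * |exp (-√A) - exp (-√B)| := by
        rw [ackleyRadial, ackleyRadial, ← mul_sub, abs_mul, abs_neg, abs_of_pos (by norm_num)]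
    _ ≤ 10 * (|A - B| / (2 * (η / 5)) + η / 5 / 2) := by
        gcongr
        exact hexp.trans (abs_sqrt_sub_sqrt_le_div_add_div (by positivity) (by positivity)
          (by positivity))
    _ ≤ 10 * ((|p.1 - q.1| + |p.2 - q.2|) / 2 / (2 * (η / 5)) + η / 5 / 2) := by gcongr
    _ = 25 / (2 * η) * (|p.1 - q.1| + |p.2 - q.2|) + η := by field_simp; ring

lemma abs_ackleyCos_sub_le (p q : ℝ × ℝ) :
    |ackleyCos p - ackleyCos q| ≤ π * exp 1 * (|p.1 - q.1| + |p.2 - q.2|) := by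
  have hcos (x y : ℝ) : |cos (2 * π * x) - cos (2 * π * y)| ≤ 2 * π * |x - y| := by
    simpa [← mul_sub, abs_mul, abs_of_pos pi_pos] using abs_cos_sub_cos_le (2 * π * x) (2 * π * y)
  have hle (x y : ℝ) : 0.5 * (cos (2 * π * x) + cos (2 * π * y)) ≤ 1 := by
    linarith [cos_le_one (2 * π * x), cos_le_one (2 * π * y)]
  calc |ackleyCos p - ackleyCos q|
      ≤ exp 1 * |0.5 * (cos (2 * π * p.1) + cos (2 * π * p.2))
          - 0.5 * (cos (2 * π * q.1) + cos (2 * π * q.2))| :=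
        abs_exp_sub_exp_le_of_le (hle _ _) (hle _ _)
    _ = exp 1 * (0.5 * |(cos (2 * π * p.1) - cos (2 * π * q.1))
          + (cos (2 * π * p.2) - cos (2 * π * q.2))|) := by
        rw [← mul_sub, abs_mul, abs_of_pos (by norm_num : (0 : ℝ) < 0.5)]; ring_nf
    _ ≤ exp 1 * (0.5 * (2 * π * |p.1 - q.1| + 2 * π * |p.2 - q.2|)) := by
        gcongr
        exact (abs_add_le _ _).trans (add_le_add (hcos _ _) (hcos _ _))
    _ = π * exp 1 * (|p.1 - q.1| + |p.2 - q.2|) := by ring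

theorem stmt_9_general (η : ℝ) (hη : 0 < η)
    (p q : ℝ × ℝ) :
    |(-10 * Real.exp (-Real.sqrt (|p.1 + p.2| / 2))
        - Real.exp (0.5 * (Real.cos (2 * Real.pi * p.1) + Real.cos (2 * Real.pi * p.2))))
      - (-10 * Real.exp (-Real.sqrt (|q.1 + q.2| / 2))
        - Real.exp (0.5 * (Real.cos (2 * Real.pi * q.1) + Real.cos (2 * Real.pi * q.2))))|
      ≤ (25 / (2 * η) + Real.pi * Real.exp 1) * (|p.1 - q.1| + |p.2 - q.2|) + η := by
  change |(ackleyRadial p - ackleyCos p) - (ackleyRadial q - ackleyCos q)| ≤ _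
  calc |(ackleyRadial p - ackleyCos p) - (ackleyRadial q - ackleyCos q)|
      ≤ |ackleyRadial p - ackleyRadial q| + |ackleyCos p - ackleyCos q| := by
        rw [sub_sub_sub_comm]; exact abs_sub _ _
    _ ≤ (25 / (2 * η) * (|p.1 - q.1| + |p.2 - q.2|) + η)
          + π * exp 1 * (|p.1 - q.1| + |p.2 - q.2|) :=
        add_le_add (abs_ackleyRadial_sub_le hη p q) (abs_ackleyCos_sub_le p q)
    _ = (25 / (2 * η) + π * exp 1) * (|p.1 - q.1| + |p.2 - q.2|) + η := by ring

/-- Vanderbei estimate `L(η) = 25/(2η) + π e` for the second test function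
`f₂(x,y) = −10 exp(−√(|x+y|/2)) − exp(0.5(cos 2πx + cos 2πy))` on `[−2,12]²`,
in the ℓ¹ norm. -/
theorem stmt_9 (η : ℝ) (hη : 0 < η)
    (p q : ℝ × ℝ)
    (hp : p ∈ Set.Icc ((-2 : ℝ), (-2 : ℝ)) ((12 : ℝ), (12 : ℝ)))
    (hq : q ∈ Set.Icc ((-2 : ℝ), (-2 : ℝ)) ((12 : ℝ), (12 : ℝ))) :
    |(-10 * Real.exp (-Real.sqrt (|p.1 + p.2| / 2))
        - Real.exp (0.5 * (Real.cos (2 * Real.pi * p.1) + Real.cos (2 * Real.pi * p.2))))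
      - (-10 * Real.exp (-Real.sqrt (|q.1 + q.2| / 2))
        - Real.exp (0.5 * (Real.cos (2 * Real.pi * q.1) + Real.cos (2 * Real.pi * q.2))))|
      ≤ (25 / (2 * η) + Real.pi * Real.exp 1) * (|p.1 - q.1| + |p.2 - q.2|) + η :=
  stmt_9_general η hη p q
end

section
/- The equation (π/2 + arcsin σ)·√(1 − σ²) = 1 + σ has exactly one solution σ in the interval [0, 1). -/
open Real Set

noncomputable def sigmaGap (σ : ℝ) : ℝ :=
  (π / 2 + arcsin σ) * √(1 - σ ^ 2) - (1 + σ)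

lemma continuous_sigmaGap : Continuous sigmaGap := by
  unfold sigmaGap
  fun_prop

lemma hasDerivAt_sigmaGap {x : ℝ} (hx : x ∈ Ioo (-1 : ℝ) 1) :
    HasDerivAt sigmaGap (-((π / 2 + arcsin x) * x / √(1 - x ^ 2))) x := by
  obtain ⟨hx₀, hx₁⟩ := hx
  have hpos : 0 < 1 - x ^ 2 := by nlinarith
  have harcsin := (hasDerivAt_arcsin hx₀.ne' hx₁.ne).const_add (π / 2)
  have hquad : HasDerivAt (fun y : ℝ => 1 - y ^ 2) (-(2 * x)) x := by
    simpa using (hasDerivAt_pow 2 x).const_sub 1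
  have hsqrt := hquad.sqrt hpos.ne'
  refine ((harcsin.mul hsqrt).sub ((hasDerivAt_id x).const_add 1)).congr_deriv ?_
  have hsq : √(1 - x ^ 2) * √(1 - x ^ 2) = 1 - x ^ 2 := mul_self_sqrt hpos.le
  field_simp
  ring

lemma strictAntiOn_sigmaGap : StrictAntiOn sigmaGap (Icc 0 1) := by
  refine strictAntiOn_of_deriv_neg (convex_Icc 0 1) continuous_sigmaGap.continuousOn ?_
  intro x hx
  rw [interior_Icc] at hx
  rw [(hasDerivAt_sigmaGap ⟨by linarith [hx.1], hx.2⟩).deriv, neg_lt_zero]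
  have hfactor : 0 < π / 2 + arcsin x := by
    linarith [pi_pos, arcsin_nonneg.mpr hx.1.le]
  exact div_pos (mul_pos hfactor hx.1) (sqrt_pos.mpr (by nlinarith [hx.1, hx.2]))

lemma sigmaGap_zero : sigmaGap 0 = π / 2 - 1 := by
  simp [sigmaGap]

lemma sigmaGap_one : sigmaGap 1 = -2 := by
  norm_num [sigmaGap]

/-- The equation `(π/2 + arcsin σ)·√(1 − σ²) = 1 + σ` has exactly one solution
`σ ∈ [0, 1)`. -/
theorem stmt_10 :
    ∃! σ : ℝ, σ ∈ Set.Ico (0 : ℝ) 1 ∧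
      (Real.pi / 2 + Real.arcsin σ) * Real.sqrt (1 - σ ^ 2) = 1 + σ := by
  have hroot_iff (σ : ℝ) :
      (π / 2 + arcsin σ) * √(1 - σ ^ 2) = 1 + σ ↔ sigmaGap σ = 0 := by
    rw [sigmaGap, sub_eq_zero]
  simp only [hroot_iff]
  have hsign : (0 : ℝ) ∈ Icc (sigmaGap 1) (sigmaGap 0) := by
    rw [sigmaGap_zero, sigmaGap_one]
    constructor <;> linarith [pi_gt_three]
  obtain ⟨σ, hσ, hσ_root⟩ :=
    intermediate_value_Icc' zero_le_one continuous_sigmaGap.continuousOn hsign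
  have hσ_ne_one : σ ≠ 1 := by
    rintro rfl
    norm_num [sigmaGap_one] at hσ_root
  refine ⟨σ, ⟨⟨hσ.1, lt_of_le_of_ne hσ.2 hσ_ne_one⟩, hσ_root⟩, ?_⟩
  rintro τ ⟨hτ, hτ_root⟩
  exact strictAntiOn_sigmaGap.injOn (Ico_subset_Icc_self hτ) hσ (hτ_root.trans hσ_root.symm)
end

section
/- Let σ be the unique solution in [0, 1) of (π/2 + arcsin σ)·√(1 − σ²) = 1 + σ, and set η̃ := π/2 − √((1 − σ)/(1 + σ)) − arcsin σ. Then for every fixed α with 0 < α < η̃, the equation (π/2 − α − arcsin τ)·√(1 − τ²) = 1 − τ has exactly one solution τ in the interval [0, 1). -/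
/-!
Substituting `τ = cos θ` with `θ = arccos τ ∈ (0, π/2]` turns the equation into
`(θ - α) sin θ = 1 - cos θ`, i.e. `θ - tan (θ/2) = α`. The left side is strictly increasing on
`[0, π/2]` (its derivative is `cos θ / (1 + cos θ)`) and runs from `0` to `π/2 - 1`, so there is
exactly one root as soon as `0 < α < π/2 - 1`. The bound on `α` follows from
`√((1 - σ)/(1 + σ)) ≥ 1 - σ` and `arcsin σ ≥ σ`.
-/

open Real Set

lemma self_le_arcsin {x : ℝ} (h₀ : 0 ≤ x) (h₁ : x ≤ 1) : x ≤ arcsin x :=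
  calc x = sin (arcsin x) := (sin_arcsin (by linarith) h₁).symm
    _ ≤ arcsin x := sin_le (arcsin_nonneg.2 h₀)

lemma one_sub_le_sqrt_div_one_add {x : ℝ} (h₀ : 0 ≤ x) (h₁ : x ≤ 1) :
    1 - x ≤ √((1 - x) / (1 + x)) := by
  rw [le_sqrt (by linarith) (div_nonneg (by linarith) (by linarith)), le_div_iff₀ (by linarith)]
  nlinarith [mul_nonneg (sub_nonneg.2 h₁) (sq_nonneg x)]

lemma one_le_sqrt_div_add_arcsin {x : ℝ} (h₀ : 0 ≤ x) (h₁ : x ≤ 1) :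
    1 ≤ √((1 - x) / (1 + x)) + arcsin x := by
  linarith [self_le_arcsin h₀ h₁, one_sub_le_sqrt_div_one_add h₀ h₁]

-- Holds for every `θ`: where `sin θ = 0` both sides are `0`, since `x / 0 = 0` and `tan` is `0` at
-- its poles.
lemma tan_half_eq_one_sub_cos_div_sin (θ : ℝ) : tan (θ / 2) = (1 - cos θ) / sin θ := by
  have hsin : sin θ = 2 * sin (θ / 2) * cos (θ / 2) := by
    rw [← sin_two_mul, mul_div_cancel₀ θ two_ne_zero]
  have hcos : 1 - cos θ = 2 * sin (θ / 2) * sin (θ / 2) := by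
    nth_rewrite 1 [← mul_div_cancel₀ θ two_ne_zero]
    rw [cos_two_mul, cos_sq']
    ring
  rw [tan_eq_sin_div_cos, hsin, hcos]
  rcases eq_or_ne (sin (θ / 2)) 0 with h | h
  · simp [h]
  · rw [mul_div_mul_left _ _ (mul_ne_zero two_ne_zero h)]

lemma sub_mul_sin_eq_one_sub_cos_iff {θ α : ℝ} (h : sin θ ≠ 0) :
    (θ - α) * sin θ = 1 - cos θ ↔ θ - tan (θ / 2) = α := by
  rw [tan_half_eq_one_sub_cos_div_sin, ← eq_div_iff h]
  constructor <;> intro heq <;> linarith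

lemma continuousOn_sub_tan_half : ContinuousOn (fun θ : ℝ => θ - tan (θ / 2)) (Ioo (-π) π) :=
  continuousOn_id.sub <| continuousOn_tan.comp (continuous_id.div_const 2).continuousOn
    fun _ hθ => (cos_pos_of_mem_Ioo ⟨by linarith [hθ.1], by linarith [hθ.2]⟩).ne'

lemma strictMonoOn_sub_tan_half :
    StrictMonoOn (fun θ : ℝ => θ - tan (θ / 2)) (Icc (-(π / 2)) (π / 2)) := by
  refine strictMonoOn_of_deriv_pos (convex_Icc _ _)
    (continuousOn_sub_tan_half.mono fun θ hθ => ⟨by linarith [hθ.1, pi_pos], by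
      linarith [hθ.2, pi_pos]⟩) fun θ hθ => ?_
  rw [interior_Icc] at hθ
  have hc : 0 < cos (θ / 2) :=
    cos_pos_of_mem_Ioo ⟨by linarith [hθ.1, pi_pos], by linarith [hθ.2, pi_pos]⟩
  have hcos : 0 < cos θ := cos_pos_of_mem_Ioo hθ
  have hderiv : HasDerivAt (fun θ : ℝ => θ - tan (θ / 2))
      (1 - 1 / cos (θ / 2) ^ 2 * (1 / 2)) θ := by
    simpa [Function.comp_def] using
      (hasDerivAt_id' θ).fun_sub ((hasDerivAt_tan hc.ne').comp θ ((hasDerivAt_id' θ).div_const 2))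
  have hsq : cos (θ / 2) ^ 2 = (1 + cos θ) / 2 := by
    rw [cos_sq, mul_div_cancel₀ θ two_ne_zero]
    ring
  rw [hderiv.deriv, hsq, sub_pos, one_div_div, div_mul_eq_mul_div, div_lt_one (by linarith)]
  linarith

lemma strictAntiOn_arccos_sub_tan_half :
    StrictAntiOn (fun τ : ℝ => arccos τ - tan (arccos τ / 2)) (Icc 0 1) :=
  strictMonoOn_sub_tan_half.comp_strictAntiOn
    (strictAntiOn_arccos.mono (Icc_subset_Icc_left (by norm_num)))
    fun τ hτ => ⟨by linarith [arccos_nonneg τ, pi_pos], arccos_le_pi_div_two.2 hτ.1⟩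

lemma continuousOn_arccos_sub_tan_half :
    ContinuousOn (fun τ : ℝ => arccos τ - tan (arccos τ / 2)) (Icc 0 1) :=
  continuousOn_sub_tan_half.comp continuous_arccos.continuousOn
    fun τ hτ => ⟨by linarith [arccos_nonneg τ, pi_pos], by
      linarith [arccos_le_pi_div_two.2 hτ.1, pi_pos]⟩

lemma arcsin_equation_iff {α τ : ℝ} (hτ : τ ∈ Ioo (-1) 1) :
    (π / 2 - α - arcsin τ) * √(1 - τ ^ 2) = 1 - τ ↔ arccos τ - tan (arccos τ / 2) = α := by
  have hsin : sin (arccos τ) ≠ 0 := by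
    rw [sin_arccos]
    exact (sqrt_pos.2 (by nlinarith [hτ.1, hτ.2])).ne'
  rw [← sub_mul_sin_eq_one_sub_cos_iff hsin, sin_arccos, cos_arccos hτ.1.le hτ.2.le,
    arccos_eq_pi_div_two_sub_arcsin, sub_right_comm]

theorem stmt_11_general (σ : ℝ) (hσmem : σ ∈ Set.Ico (0 : ℝ) 1)
    (α : ℝ) (hα0 : 0 < α)
    (hα1 : α < Real.pi / 2 - Real.sqrt ((1 - σ) / (1 + σ)) - Real.arcsin σ) :
    ∃! τ : ℝ, τ ∈ Set.Ico (0 : ℝ) 1 ∧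
      (Real.pi / 2 - α - Real.arcsin τ) * Real.sqrt (1 - τ ^ 2) = 1 - τ := by
  have hα : α ∈ Ioo ((fun τ : ℝ => arccos τ - tan (arccos τ / 2)) 1)
      ((fun τ : ℝ => arccos τ - tan (arccos τ / 2)) 0) := by
    beta_reduce
    rw [arccos_one, arccos_zero, zero_div, tan_zero, sub_zero, div_div,
      show (2 : ℝ) * 2 = 4 by norm_num, tan_pi_div_four]
    exact ⟨hα0, by linarith [one_le_sqrt_div_add_arcsin hσmem.1 hσmem.2.le]⟩
  obtain ⟨τ, hτ, hτα⟩ :=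
    intermediate_value_Ioo' zero_le_one continuousOn_arccos_sub_tan_half hα
  refine ⟨τ, ⟨Ioo_subset_Ico_self hτ, (arcsin_equation_iff ⟨by linarith [hτ.1], hτ.2⟩).2 hτα⟩, ?_⟩
  rintro τ' ⟨hτ', hτ'eq⟩
  have hτ'α := (arcsin_equation_iff ⟨by linarith [hτ'.1], hτ'.2⟩).1 hτ'eq
  exact strictAntiOn_arccos_sub_tan_half.injOn (Ico_subset_Icc_self hτ') (Ioo_subset_Icc_self hτ)
    (hτ'α.trans hτα.symm)

/-- For each fixed `α ∈ (0, η̃)`, the equation `(π/2 − α − arcsin τ)·√(1 − τ²) = 1 − τ`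
has exactly one solution `τ ∈ [0, 1)`; here `σ` is the unique root in `[0,1)` of
`(π/2 + arcsin σ)·√(1 − σ²) = 1 + σ` and `η̃ = π/2 − √((1−σ)/(1+σ)) − arcsin σ`. -/
theorem stmt_11 (σ : ℝ) (hσmem : σ ∈ Set.Ico (0 : ℝ) 1)
    (hσeq : (Real.pi / 2 + Real.arcsin σ) * Real.sqrt (1 - σ ^ 2) = 1 + σ)
    (hσuniq : ∀ σ' ∈ Set.Ico (0 : ℝ) 1,
      (Real.pi / 2 + Real.arcsin σ') * Real.sqrt (1 - σ' ^ 2) = 1 + σ' → σ' = σ)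
    (α : ℝ) (hα0 : 0 < α)
    (hα1 : α < Real.pi / 2 - Real.sqrt ((1 - σ) / (1 + σ)) - Real.arcsin σ) :
    ∃! τ : ℝ, τ ∈ Set.Ico (0 : ℝ) 1 ∧
      (Real.pi / 2 - α - Real.arcsin τ) * Real.sqrt (1 - τ ^ 2) = 1 - τ :=
  stmt_11_general σ hσmem α hα0 hα1
end

section
/- Let σ be the unique solution in [0, 1) of (π/2 + arcsin σ)·√(1 − σ²) = 1 + σ, set η̃ := π/2 − √((1 − σ)/(1 + σ)) − arcsin σ, and for 0 < α < η̃ let τ(α) be the unique solution in [0, 1) of (π/2 − α − arcsin τ)·√(1 − τ²) = 1 − τ. Define L(η) := 5π + 2/√(1 − τ(η/2)²) for 0 < η/2 < η̃, and L(η) := 5π + π − η/2 for η̃ ≤ η/2 < π. Then the function f₄(x, y) = sin(5y)·arcsin(x) − sin(5x)·arcsin(y) satisfies, for every η ∈ (0, 2π) and all p, q ∈ [−1, 1]², the inequality |f₄(p) − f₄(q)| ≤ L(η)·‖p − q‖₁ + η, where ‖(u, v)‖₁ = |u| + |v| is the ℓ¹ norm on ℝ². -/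
/-!
Splitting `f₄(p) - f₄(q)` into terms `sin(5·)·(arcsin · - arcsin ·)` and
`(sin(5·) - sin(5·))·arcsin ·`, the latter contribute at most `5π/2` times the ℓ¹ distance, so
it suffices to show `|arcsin x - arcsin y| ≤ M |x - y| + η/2` with `M = L(η) - 5π/2`.
For `0 ≤ τ < 1` the function `arcsin t - t/√(1-τ²)` increases on `[-1,-τ]`, decreases on
`[-τ,τ]` and increases on `[τ,1]`, so its increments are bounded by its rises over `[τ,1]` and
over `[-1,1]`; both are at most `η/2` as soon as `(π/2 - η/2 - arcsin τ)√(1-τ²) ≤ 1 - τ` and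
`(π/2 + arcsin τ)√(1-τ²) ≤ 1 + τ`. For `η/2 ≥ η̃` take `τ = σ`. For `η/2 < η̃` take
`τ = τ(η/2)`: both `σ` and `τ` solve `(c - arcsin s)√(1-s²) = 1 - s`, with `c = π/2 - η̃` and
the larger `c = π/2 - η/2` respectively, and `(c - arcsin s)√(1-s²) + s` decreases in `s ≥ 0`
while `arcsin s ≤ c`, so `σ ≤ τ`; then the second inequality transfers from `σ` to `τ` because
`(π/2 + arcsin s)√(1-s²) - s` decreases on `[0,1]`.
-/

open Real Set

lemma hasDerivAt_arcsin_sub_mul (m : ℝ) {t : ℝ} (h₁ : -1 < t) (h₂ : t < 1) :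
    HasDerivAt (fun s => arcsin s - m * s) (1 / √(1 - t ^ 2) - m) t := by
  simpa using (hasDerivAt_arcsin h₁.ne' h₂.ne).fun_sub ((hasDerivAt_id' t).const_mul m)

section ArcsinSubMul

variable {m a b : ℝ}

lemma monotoneOn_arcsin_sub_mul (ha : -1 ≤ a) (hb : b ≤ 1)
    (hm : ∀ t ∈ Ioo a b, m ≤ 1 / √(1 - t ^ 2)) :
    MonotoneOn (fun s => arcsin s - m * s) (Icc a b) := by
  refine monotoneOn_of_hasDerivWithinAt_nonneg (f' := fun t => 1 / √(1 - t ^ 2) - m)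
    (convex_Icc a b) (by fun_prop) (fun t ht => ?_) (fun t ht => ?_) <;> rw [interior_Icc] at ht
  · exact (hasDerivAt_arcsin_sub_mul m (by linarith [ht.1]) (by linarith [ht.2])).hasDerivWithinAt
  · exact sub_nonneg.2 (hm t ht)

lemma antitoneOn_arcsin_sub_mul (ha : -1 ≤ a) (hb : b ≤ 1)
    (hm : ∀ t ∈ Ioo a b, 1 / √(1 - t ^ 2) ≤ m) :
    AntitoneOn (fun s => arcsin s - m * s) (Icc a b) := by
  refine antitoneOn_of_hasDerivWithinAt_nonpos (f' := fun t => 1 / √(1 - t ^ 2) - m)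
    (convex_Icc a b) (by fun_prop) (fun t ht => ?_) (fun t ht => ?_) <;> rw [interior_Icc] at ht
  · exact (hasDerivAt_arcsin_sub_mul m (by linarith [ht.1]) (by linarith [ht.2])).hasDerivWithinAt
  · exact sub_nonpos.2 (hm t ht)

end ArcsinSubMul

lemma one_div_sqrt_one_sub_sq_le {s t : ℝ} (hst : s ^ 2 ≤ t ^ 2) (ht : t ^ 2 < 1) :
    1 / √(1 - s ^ 2) ≤ 1 / √(1 - t ^ 2) :=
  one_div_le_one_div_of_le (sqrt_pos.2 (by linarith)) (sqrt_le_sqrt (by linarith))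

lemma arcsin_sub_le_of_le {τ α x y : ℝ} (hτ : τ ∈ Ico 0 1)
    (h₁ : (π / 2 + arcsin τ) * √(1 - τ ^ 2) ≤ 1 + τ)
    (h₂ : (π / 2 - α - arcsin τ) * √(1 - τ ^ 2) ≤ 1 - τ)
    (hy : -1 ≤ y) (hyx : y ≤ x) (hx : x ≤ 1) :
    arcsin x - arcsin y ≤ (x - y) / √(1 - τ ^ 2) + α := by
  obtain ⟨hτ₀, hτ₁⟩ := hτ
  have hs : 0 < √(1 - τ ^ 2) := sqrt_pos.2 (by nlinarith)
  set m := 1 / √(1 - τ ^ 2)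
  set G : ℝ → ℝ := fun s => arcsin s - m * s with hG
  have hsq : ∀ t ∈ Ioo (-1 : ℝ) 1, t ^ 2 < 1 := fun t ht => by nlinarith [ht.1, ht.2]
  have hinc₁ : MonotoneOn G (Icc τ 1) := monotoneOn_arcsin_sub_mul (by linarith) le_rfl
    fun t ht => one_div_sqrt_one_sub_sq_le (by nlinarith [ht.1]) (hsq t ⟨by linarith [ht.1], ht.2⟩)
  have hinc₂ : MonotoneOn G (Icc (-1) (-τ)) := monotoneOn_arcsin_sub_mul le_rfl (by linarith)
    fun t ht => one_div_sqrt_one_sub_sq_le (by nlinarith [ht.2]) (hsq t ⟨ht.1, by linarith [ht.2]⟩)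
  have hdec : AntitoneOn G (Icc (-τ) τ) := antitoneOn_arcsin_sub_mul (by linarith) (by linarith)
    fun t ht => one_div_sqrt_one_sub_sq_le (by nlinarith [ht.1, ht.2]) (by nlinarith)
  have hA : G 1 - G τ ≤ α := by
    have : π / 2 - α - arcsin τ ≤ (1 - τ) * m := by
      rw [mul_one_div, le_div_iff₀ hs]; exact h₂
    simp only [hG, arcsin_one]; linarith
  have hB : G 1 - G (-1) ≤ α := by
    have : π - α ≤ 2 * m := by
      rw [mul_one_div, le_div_iff₀ hs]; linarith
    simp only [hG, arcsin_one, arcsin_neg_one]; linarith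
  have hodd : G (-τ) - G (-1) = G 1 - G τ := by
    simp only [hG, arcsin_neg, arcsin_one]; ring
  have hα : 0 ≤ α := (sub_nonneg.2 (hinc₁ ⟨le_rfl, hτ₁.le⟩ ⟨hτ₁.le, le_rfl⟩ hτ₁.le)).trans hA
  suffices G x - G y ≤ α by
    have : G x - G y = arcsin x - arcsin y - (x - y) / √(1 - τ ^ 2) := by simp only [hG, m]; ring
    linarith
  have hleft : ∀ t ∈ Icc (-1) τ, G t ≤ G (-τ) := fun t ht => by
    rcases le_total t (-τ) with h | h
    · exact hinc₂ ⟨ht.1, h⟩ ⟨by linarith, le_rfl⟩ h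
    · exact hdec ⟨le_rfl, by linarith⟩ ⟨h, ht.2⟩ h
  have hright : ∀ t ∈ Icc (-τ) 1, G τ ≤ G t := fun t ht => by
    rcases le_total t τ with h | h
    · exact hdec ⟨ht.1, h⟩ ⟨by linarith, le_rfl⟩ h
    · exact hinc₁ ⟨le_rfl, by linarith⟩ ⟨h, ht.2⟩ h
  rcases le_total y (-τ) with hyτ | hyτ
  · have hGy : G (-1) ≤ G y := hinc₂ ⟨le_rfl, by linarith⟩ ⟨hy, hyτ⟩ hy
    rcases le_total x τ with hxτ | hxτ
    · linarith [hleft x ⟨by linarith, hxτ⟩]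
    · linarith [hinc₁ ⟨hxτ, hx⟩ ⟨by linarith, le_rfl⟩ hx]
  · rcases le_total x τ with hxτ | hxτ
    · linarith [hdec ⟨hyτ, by linarith⟩ ⟨by linarith, hxτ⟩ hyx]
    · linarith [hinc₁ ⟨hxτ, hx⟩ ⟨by linarith, le_rfl⟩ hx, hright y ⟨hyτ, by linarith⟩]

lemma abs_arcsin_sub_le {τ α M : ℝ} (hτ : τ ∈ Ico 0 1)
    (h₁ : (π / 2 + arcsin τ) * √(1 - τ ^ 2) ≤ 1 + τ)
    (h₂ : (π / 2 - α - arcsin τ) * √(1 - τ ^ 2) ≤ 1 - τ)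
    (hM : 1 / √(1 - τ ^ 2) ≤ M) {x y : ℝ} (hx : x ∈ Icc (-1) 1) (hy : y ∈ Icc (-1) 1) :
    |arcsin x - arcsin y| ≤ M * |x - y| + α := by
  have hsub {x y : ℝ} (hx : x ∈ Icc (-1) 1) (hy : y ∈ Icc (-1) 1) (hyx : y ≤ x) :
      |arcsin x - arcsin y| ≤ M * |x - y| + α := by
    have hdiv : (x - y) / √(1 - τ ^ 2) ≤ M * (x - y) := by
      rw [div_eq_mul_one_div, mul_comm]; exact mul_le_mul_of_nonneg_right hM (by linarith)
    rw [abs_of_nonneg (sub_nonneg.2 (arcsin_le_arcsin hyx)), abs_of_nonneg (by linarith)]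
    linarith [arcsin_sub_le_of_le hτ h₁ h₂ hy.1 hyx hx.2]
  rcases le_total y x with h | h
  · exact hsub hx hy h
  · rw [abs_sub_comm, abs_sub_comm x]; exact hsub hy hx h

lemma hasDerivAt_sub_arcsin_mul_sqrt_add (c : ℝ) {t : ℝ} (h₁ : -1 < t) (h₂ : t < 1) :
    HasDerivAt (fun s => (c - arcsin s) * √(1 - s ^ 2) + s)
      (-t * (c - arcsin t) / √(1 - t ^ 2)) t := by
  have hs : √(1 - t ^ 2) ≠ 0 := (sqrt_pos.2 (by nlinarith)).ne'
  have hsqrt := ((hasDerivAt_pow 2 t).const_sub 1).sqrt (by nlinarith)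
  refine ((((hasDerivAt_arcsin h₁.ne' h₂.ne).const_sub c).mul hsqrt).add
    (hasDerivAt_id' t)).congr_deriv ?_
  field_simp
  ring

section SubArcsinMulSqrt

variable {c a b : ℝ}

lemma antitoneOn_sub_arcsin_mul_sqrt_add (ha : 0 ≤ a) (hb : b ≤ 1) (hc : arcsin b ≤ c) :
    AntitoneOn (fun s => (c - arcsin s) * √(1 - s ^ 2) + s) (Icc a b) := by
  refine antitoneOn_of_hasDerivWithinAt_nonpos
    (f' := fun t => -t * (c - arcsin t) / √(1 - t ^ 2)) (convex_Icc a b) (by fun_prop)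
    (fun t ht => ?_) (fun t ht => ?_) <;> rw [interior_Icc] at ht
  · exact (hasDerivAt_sub_arcsin_mul_sqrt_add c (by linarith [ht.1])
      (by linarith [ht.2])).hasDerivWithinAt
  · have : arcsin t ≤ c := (arcsin_le_arcsin ht.2.le).trans hc
    exact div_nonpos_of_nonpos_of_nonneg
      (mul_nonpos_of_nonpos_of_nonneg (by linarith [ht.1]) (by linarith)) (sqrt_nonneg _)

lemma monotoneOn_sub_arcsin_mul_sqrt_add (ha : 0 ≤ a) (hb : b ≤ 1) (hc : c ≤ arcsin a) :
    MonotoneOn (fun s => (c - arcsin s) * √(1 - s ^ 2) + s) (Icc a b) := by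
  refine monotoneOn_of_hasDerivWithinAt_nonneg
    (f' := fun t => -t * (c - arcsin t) / √(1 - t ^ 2)) (convex_Icc a b) (by fun_prop)
    (fun t ht => ?_) (fun t ht => ?_) <;> rw [interior_Icc] at ht
  · exact (hasDerivAt_sub_arcsin_mul_sqrt_add c (by linarith [ht.1])
      (by linarith [ht.2])).hasDerivWithinAt
  · have : c ≤ arcsin t := hc.trans (arcsin_le_arcsin ht.1.le)
    exact div_nonneg (mul_nonneg_of_nonpos_of_nonpos (by linarith [ht.1]) (by linarith))
      (sqrt_nonneg _)

end SubArcsinMulSqrt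

lemma le_of_sub_arcsin_mul_sqrt_eq_one_sub {c c' s t : ℝ} (hs : s < 1) (ht : 0 ≤ t) (hc : c' < c)
    (hs_eq : (c' - arcsin s) * √(1 - s ^ 2) = 1 - s)
    (ht_eq : (c - arcsin t) * √(1 - t ^ 2) = 1 - t) : s ≤ t := by
  by_contra! hts
  have hsqrt : 0 < √(1 - s ^ 2) := sqrt_pos.2 (by nlinarith)
  have hcs : arcsin s ≤ c := by
    have : 0 < (c' - arcsin s) * √(1 - s ^ 2) := by linarith
    linarith [(pos_iff_pos_of_mul_pos this).2 hsqrt]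
  have := antitoneOn_sub_arcsin_mul_sqrt_add ht hs.le hcs ⟨le_rfl, hts.le⟩ ⟨hts.le, le_rfl⟩ hts.le
  simp only at this
  nlinarith [mul_pos (sub_pos.2 hc) hsqrt]

lemma pi_div_two_add_arcsin_mul_sqrt_le {s t : ℝ} (hs : 0 ≤ s) (hst : s ≤ t) (ht : t ≤ 1)
    (h : (π / 2 + arcsin s) * √(1 - s ^ 2) ≤ 1 + s) :
    (π / 2 + arcsin t) * √(1 - t ^ 2) ≤ 1 + t := by
  have := monotoneOn_sub_arcsin_mul_sqrt_add (c := -(π / 2)) hs ht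
    (by linarith [neg_pi_div_two_le_arcsin s]) ⟨le_rfl, hst⟩ ⟨hst, le_rfl⟩ hst
  simp only at this
  nlinarith

lemma sqrt_div_mul_sqrt_one_sub_sq {t : ℝ} (h₁ : -1 < t) (h₂ : t ≤ 1) :
    √((1 - t) / (1 + t)) * √(1 - t ^ 2) = 1 - t := by
  have h : (1 - t) / (1 + t) * (1 - t ^ 2) = (1 - t) ^ 2 := by
    field_simp [show 1 + t ≠ 0 by linarith]; ring
  rw [← sqrt_mul (div_nonneg (by linarith) (by linarith)), h, sqrt_sq (by linarith)]

lemma abs_sin_mul_arcsin_sub_le (c a b a' b' : ℝ) :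
    |sin (c * b) * arcsin a - sin (c * b') * arcsin a'|
      ≤ |arcsin a - arcsin a'| + |c| * (π / 2) * |b - b'| := by
  have hsin : |sin (c * b) - sin (c * b')| ≤ |c| * |b - b'| := by
    simpa [← mul_sub, abs_mul] using abs_sin_sub_sin_le (c * b) (c * b')
  have harcsin : |arcsin a'| ≤ π / 2 :=
    abs_le.2 ⟨neg_pi_div_two_le_arcsin a', arcsin_le_pi_div_two a'⟩
  calc |sin (c * b) * arcsin a - sin (c * b') * arcsin a'|
      = |sin (c * b) * (arcsin a - arcsin a') + (sin (c * b) - sin (c * b')) * arcsin a'| := by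
        ring_nf
    _ ≤ |sin (c * b)| * |arcsin a - arcsin a'| + |sin (c * b) - sin (c * b')| * |arcsin a'| := by
        rw [← abs_mul, ← abs_mul]; exact abs_add_le _ _
    _ ≤ 1 * |arcsin a - arcsin a'| + (|c| * |b - b'|) * (π / 2) := by
        gcongr; exact abs_sin_le_one _
    _ = |arcsin a - arcsin a'| + |c| * (π / 2) * |b - b'| := by ring

lemma abs_sin_mul_arcsin_sub_sin_mul_arcsin_sub_le {M α : ℝ}
    (harcsin : ∀ x ∈ Icc (-1 : ℝ) 1, ∀ y ∈ Icc (-1 : ℝ) 1,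
      |arcsin x - arcsin y| ≤ M * |x - y| + α)
    {p q : ℝ × ℝ} (hp : p ∈ Icc (-1, -1) (1, 1)) (hq : q ∈ Icc (-1, -1) (1, 1)) :
    |(sin (5 * p.2) * arcsin p.1 - sin (5 * p.1) * arcsin p.2)
      - (sin (5 * q.2) * arcsin q.1 - sin (5 * q.1) * arcsin q.2)|
      ≤ (M + 5 * π / 2) * (|p.1 - q.1| + |p.2 - q.2|) + 2 * α := by
  have h₁ := abs_sin_mul_arcsin_sub_le 5 p.1 p.2 q.1 q.2
  have h₂ := abs_sin_mul_arcsin_sub_le 5 p.2 p.1 q.2 q.1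
  have a₁ := harcsin p.1 ⟨hp.1.1, hp.2.1⟩ q.1 ⟨hq.1.1, hq.2.1⟩
  have a₂ := harcsin p.2 ⟨hp.1.2, hp.2.2⟩ q.2 ⟨hq.1.2, hq.2.2⟩
  rw [abs_of_pos (by norm_num : (0 : ℝ) < 5)] at h₁ h₂
  calc _ = |(sin (5 * p.2) * arcsin p.1 - sin (5 * q.2) * arcsin q.1)
        - (sin (5 * p.1) * arcsin p.2 - sin (5 * q.1) * arcsin q.2)| := by ring_nf
    _ ≤ |sin (5 * p.2) * arcsin p.1 - sin (5 * q.2) * arcsin q.1|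
        + |sin (5 * p.1) * arcsin p.2 - sin (5 * q.1) * arcsin q.2| := abs_sub _ _
    _ ≤ _ := by linarith

theorem stmt_12_general (σ : ℝ) (hσmem : σ ∈ Set.Ico (0 : ℝ) 1)
    (hσeq : (Real.pi / 2 + Real.arcsin σ) * Real.sqrt (1 - σ ^ 2) = 1 + σ)
    (η' : ℝ) (hη' : η' = Real.pi / 2 - Real.sqrt ((1 - σ) / (1 + σ)) - Real.arcsin σ)
    (τ : ℝ → ℝ)
    (hτ : ∀ α : ℝ, 0 < α → α < η' →
      τ α ∈ Set.Ico (0 : ℝ) 1 ∧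
        (Real.pi / 2 - α - Real.arcsin (τ α)) * Real.sqrt (1 - (τ α) ^ 2) = 1 - τ α)
    (L : ℝ → ℝ)
    (hL1 : ∀ η : ℝ, 0 < η / 2 → η / 2 < η' →
      L η = 5 * Real.pi + 2 / Real.sqrt (1 - (τ (η / 2)) ^ 2))
    (hL2 : ∀ η : ℝ, η' ≤ η / 2 → η / 2 < Real.pi →
      L η = 5 * Real.pi + (Real.pi - η / 2)) :
    ∀ η : ℝ, 0 < η → η < 2 * Real.pi →
      ∀ p ∈ Set.Icc ((-1 : ℝ), (-1 : ℝ)) ((1 : ℝ), (1 : ℝ)),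
        ∀ q ∈ Set.Icc ((-1 : ℝ), (-1 : ℝ)) ((1 : ℝ), (1 : ℝ)),
          |(Real.sin (5 * p.2) * Real.arcsin p.1 - Real.sin (5 * p.1) * Real.arcsin p.2)
            - (Real.sin (5 * q.2) * Real.arcsin q.1 - Real.sin (5 * q.1) * Real.arcsin q.2)|
            ≤ L η * (|p.1 - q.1| + |p.2 - q.2|) + η := by
  intro η hη₀ hη₂π p hp q hq
  obtain ⟨hσ₀, hσ₁⟩ := hσmem
  have hση' : (π / 2 - η' - arcsin σ) * √(1 - σ ^ 2) = 1 - σ := by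
    rw [hη']
    convert sqrt_div_mul_sqrt_one_sub_sq (t := σ) (by linarith) hσ₁.le using 2
    ring
  have harcsin : ∀ x ∈ Icc (-1 : ℝ) 1, ∀ y ∈ Icc (-1 : ℝ) 1,
      |arcsin x - arcsin y| ≤ (L η - 5 * π / 2) * |x - y| + η / 2 := by
    intro x hx y hy
    rcases lt_or_ge (η / 2) η' with hsmall | hlarge
    · obtain ⟨hτmem, hτeq⟩ := hτ (η / 2) (by linarith) hsmall
      have hστ : σ ≤ τ (η / 2) :=
        le_of_sub_arcsin_mul_sqrt_eq_one_sub hσ₁ hτmem.1 (by linarith) hση' hτeq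
      refine abs_arcsin_sub_le hτmem (pi_div_two_add_arcsin_mul_sqrt_le hσ₀ hστ hτmem.2.le hσeq.le)
        hτeq.le ?_ hx hy
      rw [hL1 η (by linarith) hsmall, div_eq_mul_one_div 2]
      linarith [pi_pos, one_div_nonneg.2 (sqrt_nonneg (1 - τ (η / 2) ^ 2))]
    · have hsqrt : 0 < √(1 - σ ^ 2) := sqrt_pos.2 (by nlinarith)
      have hpi : 1 / √(1 - σ ^ 2) ≤ π := by
        rw [div_le_iff₀ hsqrt]; nlinarith [arcsin_le_pi_div_two σ]
      refine abs_arcsin_sub_le ⟨hσ₀, hσ₁⟩ hσeq.le ?_ ?_ hx hy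
      · exact hση' ▸ mul_le_mul_of_nonneg_right (by linarith) hsqrt.le
      · rw [hL2 η hlarge (by linarith)]; linarith
  exact (abs_sin_mul_arcsin_sub_sin_mul_arcsin_sub_le harcsin hp hq).trans_eq (by ring)

/-- Formula (6) of the paper: with `σ`, `η̃`, `τ(·)` as indicated and
`L(η) = 5π + 2/√(1 − τ(η/2)²)` for `0 < η/2 < η̃`, `L(η) = 5π + (π − η/2)` for
`η̃ ≤ η/2 < π`, the fourth test function `f₄(x,y) = sin(5y) arcsin x − sin(5x) arcsin y`
satisfies the Vanderbei inequality on `[−1,1]²` in the ℓ¹ norm for all `η ∈ (0, 2π)`. -/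
theorem stmt_12 (σ : ℝ) (hσmem : σ ∈ Set.Ico (0 : ℝ) 1)
    (hσeq : (Real.pi / 2 + Real.arcsin σ) * Real.sqrt (1 - σ ^ 2) = 1 + σ)
    (hσuniq : ∀ σ' ∈ Set.Ico (0 : ℝ) 1,
      (Real.pi / 2 + Real.arcsin σ') * Real.sqrt (1 - σ' ^ 2) = 1 + σ' → σ' = σ)
    (η' : ℝ) (hη' : η' = Real.pi / 2 - Real.sqrt ((1 - σ) / (1 + σ)) - Real.arcsin σ)
    (τ : ℝ → ℝ)
    (hτ : ∀ α : ℝ, 0 < α → α < η' →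
      τ α ∈ Set.Ico (0 : ℝ) 1 ∧
        (Real.pi / 2 - α - Real.arcsin (τ α)) * Real.sqrt (1 - (τ α) ^ 2) = 1 - τ α)
    (hτuniq : ∀ α : ℝ, 0 < α → α < η' → ∀ τ' ∈ Set.Ico (0 : ℝ) 1,
      (Real.pi / 2 - α - Real.arcsin τ') * Real.sqrt (1 - τ' ^ 2) = 1 - τ' → τ' = τ α)
    (L : ℝ → ℝ)
    (hL1 : ∀ η : ℝ, 0 < η / 2 → η / 2 < η' →
      L η = 5 * Real.pi + 2 / Real.sqrt (1 - (τ (η / 2)) ^ 2))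
    (hL2 : ∀ η : ℝ, η' ≤ η / 2 → η / 2 < Real.pi →
      L η = 5 * Real.pi + (Real.pi - η / 2)) :
    ∀ η : ℝ, 0 < η → η < 2 * Real.pi →
      ∀ p ∈ Set.Icc ((-1 : ℝ), (-1 : ℝ)) ((1 : ℝ), (1 : ℝ)),
        ∀ q ∈ Set.Icc ((-1 : ℝ), (-1 : ℝ)) ((1 : ℝ), (1 : ℝ)),
          |(Real.sin (5 * p.2) * Real.arcsin p.1 - Real.sin (5 * p.1) * Real.arcsin p.2)
            - (Real.sin (5 * q.2) * Real.arcsin q.1 - Real.sin (5 * q.1) * Real.arcsin q.2)|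
            ≤ L η * (|p.1 - q.1| + |p.2 - q.2|) + η :=
  stmt_12_general σ hσmem hσeq η' hη' τ hτ L hL1 hL2
end

section
/- Let A be a subset of a real normed space, let f : A → ℝ satisfy the Vanderbei condition with modulus L, and let ε > 0 and β ∈ (0, 1). For y ∈ A and F ∈ ℝ with F ≤ f(y), define ρ := sup{ (f(y) − F + ε − η)/L(η) : 0 < η ≤ f(y) − F + βε }. Then every x ∈ A with ‖x − y‖ < ρ satisfies f(x) ≥ F − ε. -/
/-- Exclusion estimate of Step 1 / operation 2.3 of Algorithm II: with
`ρ = sup{(f y − F + ε − η)/L η : 0 < η ≤ f y − F + βε}` (supremum in `EReal`, as the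
set need not be bounded above), every `x ∈ A` with `‖x − y‖ < ρ` satisfies
`f x ≥ F − ε`. -/
theorem stmt_16 {E : Type*} [NormedAddCommGroup E] [NormedSpace ℝ E]
    (A : Set E) (f : E → ℝ) (L : ℝ → ℝ)
    (hLpos : ∀ η : ℝ, 0 < η → 0 < L η)
    (hV : ∀ η : ℝ, 0 < η → ∀ x ∈ A, ∀ y ∈ A, |f x - f y| ≤ L η * ‖x - y‖ + η)
    (ε β : ℝ) (hε : 0 < ε) (hβ0 : 0 < β) (hβ1 : β < 1)
    (y : E) (hy : y ∈ A) (F : ℝ) (hF : F ≤ f y)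
    (x : E) (hx : x ∈ A)
    (hxy : (‖x - y‖ : EReal)
      < ⨆ η ∈ Set.Ioc (0 : ℝ) (f y - F + β * ε), (((f y - F + ε - η) / L η : ℝ) : EReal)) :
    F - ε ≤ f x := by
  rw [lt_iSup_iff] at hxy
  obtain ⟨η, hxy⟩ := hxy
  rw [lt_iSup_iff] at hxy
  obtain ⟨hη, hxy⟩ := hxy
  rw [EReal.coe_lt_coe_iff] at hxy
  obtain ⟨hη0, hη1⟩ := hη
  have hL := hLpos η hη0
  have hnorm : L η * ‖x - y‖ < f y - F + ε - η := by
    have h := (lt_div_iff₀ hL).mp hxy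
    nlinarith [h]
  have hVv := hV η hη0 x hx y hy
  have : f y - f x ≤ |f x - f y| := by
    rw [abs_sub_comm]; exact le_abs_self _
  linarith
end
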